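/- arXiv:0705.3773 — 2 statements merged into one kernel-verified Lean document; each statement's English description precedes it below -/
import Mathlib

section
/- Let γ, ρ ∈ (0,1) and let b ∈ Incomp(γ,ρ) be an incompressible unit vector in ℂⁿ. Then there exist j ∈ {1,2} and a set σ₁(b) ⊆ {1,…,n} of cardinality |σ₁(b)| ≥ c n with c ≥ ρ²γ/4, such that for all k ∈ σ₁(b): ρ/(2√(2n)) ≤ |b_{jk}| ≤ 1/√(γn), where b_{1k} = Re b_k and b_{2k} = Im b_k. -/
/-!
At most `γn` coordinates have `‖b_k‖ > 1/√(γn)`, so by incompressibility (compare `b` with its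
truncation to those coordinates) the others carry mass `> ρ²`. The coordinates with
`‖b_k‖ < ρ/√(2n)` carry mass `≤ ρ²/2`, so the window `ρ/√(2n) ≤ ‖b_k‖ ≤ 1/√(γn)` carries more
than `ρ²/2`, hence holds more than `ρ²γn/2` coordinates. On each of them the real or the imaginary
part has size at least `‖b_k‖/2`, and one of the two choices serves at least half of the window.
-/

open scoped Classical

/-- A vector `b ∈ ℂⁿ` is sparse if its support has at most `γ n` coordinates. -/
noncomputable def IsSparse {n : ℕ} (γ : ℝ) (b : EuclideanSpace ℂ (Fin n)) : Prop :=
  ((Finset.univ.filter fun k => b k ≠ 0).card : ℝ) ≤ γ * n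

/-- A unit vector `b` is compressible if it is within Euclidean distance `ρ` of the set of
sparse vectors. -/
noncomputable def IsCompressible {n : ℕ} (γ ρ : ℝ) (b : EuclideanSpace ℂ (Fin n)) : Prop :=
  ‖b‖ = 1 ∧ ∃ s : EuclideanSpace ℂ (Fin n), IsSparse γ s ∧ ‖b - s‖ ≤ ρ

/-- A unit vector is incompressible if it is not compressible. -/
noncomputable def IsIncompressible {n : ℕ} (γ ρ : ℝ) (b : EuclideanSpace ℂ (Fin n)) : Prop :=
  ‖b‖ = 1 ∧ ¬ ∃ s : EuclideanSpace ℂ (Fin n), IsSparse γ s ∧ ‖b - s‖ ≤ ρ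

open Finset

lemma sum_sq_norm_le_card_mul_sq {ι E : Type*} [SeminormedAddCommGroup E] (f : ι → E)
    (s : Finset ι) {t : ℝ} (hs : ∀ k ∈ s, ‖f k‖ ≤ t) : ∑ k ∈ s, ‖f k‖ ^ 2 ≤ #s * t ^ 2 := by
  rw [← nsmul_eq_mul]
  exact sum_le_card_nsmul _ _ _ fun k hk => pow_le_pow_left₀ (norm_nonneg _) (hs k hk) 2

namespace EuclideanSpace

variable {𝕜 ι : Type*} [RCLike 𝕜] [Fintype ι]

lemma card_filter_lt_norm_mul_sq_le (x : EuclideanSpace 𝕜 ι) {t : ℝ} (ht : 0 ≤ t) :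
    #{k | t < ‖x k‖} * t ^ 2 ≤ ‖x‖ ^ 2 := by
  rw [EuclideanSpace.norm_sq_eq, ← nsmul_eq_mul]
  calc #{k | t < ‖x k‖} • t ^ 2 ≤ ∑ k with t < ‖x k‖, ‖x k‖ ^ 2 :=
        card_nsmul_le_sum _ _ _ fun k hk => pow_le_pow_left₀ ht (mem_filter.1 hk).2.le 2
    _ ≤ ∑ k, ‖x k‖ ^ 2 := sum_le_sum_of_subset_of_nonneg (subset_univ _) fun _ _ _ => by positivity

variable [DecidableEq ι]

def truncate (S : Finset ι) (x : EuclideanSpace 𝕜 ι) : EuclideanSpace 𝕜 ι :=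
  WithLp.toLp 2 fun k => if k ∈ S then x k else 0

lemma card_truncate_ne_zero_le (S : Finset ι) (x : EuclideanSpace 𝕜 ι) :
    #{k | truncate S x k ≠ 0} ≤ #S :=
  card_le_card fun k hk => by
    by_contra hkS
    simp [truncate, hkS] at hk

lemma norm_sub_truncate_sq (S : Finset ι) (x : EuclideanSpace 𝕜 ι) :
    ‖x - truncate S x‖ ^ 2 = ∑ k ∈ Sᶜ, ‖x k‖ ^ 2 := by
  rw [EuclideanSpace.norm_sq_eq, ← sum_add_sum_compl S,
    sum_eq_zero fun k hk => by simp [truncate, hk], zero_add]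
  exact sum_congr rfl fun k hk => by simp [truncate, mem_compl.1 hk]

end EuclideanSpace

namespace IsIncompressible

variable {n : ℕ} {γ ρ : ℝ} {b : EuclideanSpace ℂ (Fin n)}

lemma dim_pos (hb : IsIncompressible γ ρ b) : 0 < n := by
  rcases n.eq_zero_or_pos with rfl | hn
  · simpa [Subsingleton.elim b 0] using hb.1
  · exact hn

lemma sq_lt_sum_compl_norm_sq (hb : IsIncompressible γ ρ b) (hρ : 0 ≤ ρ) (S : Finset (Fin n))
    (hS : (#S : ℝ) ≤ γ * n) : ρ ^ 2 < ∑ k ∈ Sᶜ, ‖b k‖ ^ 2 := by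
  have hsparse : IsSparse γ (EuclideanSpace.truncate S b) :=
    le_trans (by exact_mod_cast EuclideanSpace.card_truncate_ne_zero_le S b) hS
  have hfar : ρ < ‖b - EuclideanSpace.truncate S b‖ :=
    lt_of_not_ge fun h => hb.2 ⟨_, hsparse, h⟩
  rw [← EuclideanSpace.norm_sub_truncate_sq S b]
  exact pow_lt_pow_left₀ hfar hρ two_ne_zero

lemma mul_lt_card_norm_mem_Icc (hb : IsIncompressible γ ρ b) (hγ : 0 < γ) (hρ : 0 ≤ ρ) :
    ρ ^ 2 * γ / 2 * n < #{k | ‖b k‖ ∈ Set.Icc (ρ / √(2 * n)) (1 / √(γ * n))} := by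
  have hn : (0 : ℝ) < n := by exact_mod_cast hb.dim_pos
  set t := 1 / √(γ * n)
  set u := ρ / √(2 * n)
  have ht2 : t ^ 2 = 1 / (γ * n) := by rw [div_pow, one_pow, Real.sq_sqrt (by positivity)]
  have hu2 : u ^ 2 = ρ ^ 2 / (2 * n) := by rw [div_pow, Real.sq_sqrt (by positivity)]
  set A : Finset (Fin n) := {k | t < ‖b k‖}
  set σ : Finset (Fin n) := {k | ‖b k‖ ∈ Set.Icc u t}
  set small : Finset (Fin n) := {k | ‖b k‖ < u}
  have hA : (#A : ℝ) ≤ γ * n := by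
    have := b.card_filter_lt_norm_mul_sq_le (t := t) (by positivity)
    rwa [hb.1, ht2, one_pow, mul_one_div, div_le_one (by positivity)] at this
  have hcover : Aᶜ ⊆ σ ∪ small := fun k hk => by
    simp only [A, σ, small, mem_compl, mem_union, mem_filter, mem_univ, true_and, not_lt] at hk ⊢
    exact (le_or_gt u ‖b k‖).imp (⟨·, hk⟩) id
  have hdisj : Disjoint σ small :=
    disjoint_filter.2 fun _ _ hσ hsmall => hsmall.not_ge hσ.1
  have hσ : ∑ k ∈ σ, ‖b k‖ ^ 2 ≤ #σ / (γ * n) := by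
    rw [div_eq_mul_one_div, ← ht2]
    exact sum_sq_norm_le_card_mul_sq _ _ fun k hk => (mem_filter.1 hk).2.2
  have hsmall : ∑ k ∈ small, ‖b k‖ ^ 2 ≤ ρ ^ 2 / 2 := calc
    _ ≤ #small * u ^ 2 := sum_sq_norm_le_card_mul_sq _ _ fun k hk => (mem_filter.1 hk).2.le
    _ ≤ n * u ^ 2 := by gcongr; exact_mod_cast (card_le_univ _).trans (by simp)
    _ = ρ ^ 2 / 2 := by rw [hu2]; field_simp
  have hmass : ρ ^ 2 < #σ / (γ * n) + ρ ^ 2 / 2 := calc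
    ρ ^ 2 < ∑ k ∈ Aᶜ, ‖b k‖ ^ 2 := hb.sq_lt_sum_compl_norm_sq hρ A hA
    _ ≤ ∑ k ∈ σ ∪ small, ‖b k‖ ^ 2 :=
      sum_le_sum_of_subset_of_nonneg hcover fun _ _ _ => by positivity
    _ = ∑ k ∈ σ, ‖b k‖ ^ 2 + ∑ k ∈ small, ‖b k‖ ^ 2 := sum_union hdisj
    _ ≤ #σ / (γ * n) + ρ ^ 2 / 2 := add_le_add hσ hsmall
  have : ρ ^ 2 / 2 * (γ * n) < #σ := (lt_div_iff₀ (by positivity)).1 (by linarith)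
  linarith

end IsIncompressible

/-- The paper's components `z_1 = Re z`, `z_2 = Im z`, indexed from `0`. -/
def Complex.reImPart (j : Fin 2) (z : ℂ) : ℝ := if j = 0 then z.re else z.im

lemma Complex.abs_reImPart_le_norm (j : Fin 2) (z : ℂ) : |z.reImPart j| ≤ ‖z‖ := by
  unfold reImPart
  split_ifs
  exacts [abs_re_le_norm z, abs_im_le_norm z]

lemma Complex.exists_norm_le_two_mul_abs_reImPart (z : ℂ) : ∃ j, ‖z‖ ≤ 2 * |z.reImPart j| := by
  have := norm_le_abs_re_add_abs_im z
  rcases le_total |z.re| |z.im| with h | h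
  · exact ⟨1, by simp [reImPart]; linarith⟩
  · exact ⟨0, by simp [reImPart]; linarith⟩

/-- **Lemma 1 (incompressible vectors are spread).** For an incompressible unit vector
`b ∈ Incomp(γ,ρ)` there are `j ∈ {1,2}` and a set `σ₁(b)` of at least `(ρ²γ/4) n` coordinates
on which `ρ/(2√(2n)) ≤ |b_{jk}| ≤ 1/√(γn)`, where `b_{1k} = Re b_k`, `b_{2k} = Im b_k`. -/
theorem incompressible_spread
    {n : ℕ} (γ ρ : ℝ) (hγ : γ ∈ Set.Ioo (0 : ℝ) 1) (hρ : ρ ∈ Set.Ioo (0 : ℝ) 1)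
    (b : EuclideanSpace ℂ (Fin n)) (hb : IsIncompressible γ ρ b) :
    ∃ j : Fin 2, ∃ σ₁ : Finset (Fin n),
      ρ ^ 2 * γ / 4 * n ≤ (σ₁.card : ℝ) ∧
      ∀ k ∈ σ₁,
        ρ / (2 * Real.sqrt (2 * n)) ≤ |if j = 0 then (b k).re else (b k).im| ∧
        |if j = 0 then (b k).re else (b k).im| ≤ 1 / Real.sqrt (γ * n) := by
  have hσ := hb.mul_lt_card_norm_mem_Icc hγ.1 hρ.1.le
  set σ : Finset (Fin n) := {k | ‖b k‖ ∈ Set.Icc (ρ / √(2 * n)) (1 / √(γ * n))}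
  choose J hJ using fun k => (b k).exists_norm_le_two_mul_abs_reImPart
  obtain ⟨j, -, hj⟩ := exists_le_card_fiber_of_nsmul_le_card_of_maps_to (s := σ) (f := J)
    (b := (#σ : ℝ) / 2) (fun _ _ => mem_univ _) univ_nonempty (by simp [mul_div_cancel₀])
  refine ⟨j, {k ∈ σ | J k = j}, by linarith, fun k hk => ?_⟩
  obtain ⟨hkσ, rfl⟩ := mem_filter.1 hk
  obtain ⟨hlo, hhi⟩ := (mem_filter.1 hkσ).2
  have hhalf : ρ / (2 * √(2 * n)) = ρ / √(2 * n) / 2 := by ring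
  have hlo' : ρ / (2 * √(2 * n)) ≤ |(b k).reImPart (J k)| := by linarith [hJ k]
  exact ⟨hlo', ((b k).abs_reImPart_le_norm _).trans hhi⟩
end

section
/- For every complex number z and every real r > 0: ∫_{−π}^{π} log| z − r e^{iθ} | dθ = 2π log r if |z| ≤ r, and = 2π log|z| if |z| > r. -/
/-!
Shifting the interval of integration to `[0, 2π]` by periodicity, the integral is `2π` times the
average of `log ‖· - z‖` over the circle of radius `r` about `0`. That average is
`log r + log⁺ (‖z‖ / r)`, the mean value property for the harmonic functions `log ‖1 - z / w‖`
(when `‖z‖ < r`) and `log ‖1 - w / z‖` (when `‖z‖ > r`); the two cases of the theorem are the two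
branches of `log⁺`.
-/

open Real

theorem Real.integral_neg_pi_pi_circleMap_eq_smul_circleAverage
    {E : Type*} [NormedAddCommGroup E] [NormedSpace ℝ E] (f : ℂ → E) (c : ℂ) (R : ℝ) :
    ∫ θ in (-π)..π, f (circleMap c R θ) = (2 * π) • circleAverage f c R := by
  have hper : Function.Periodic (fun θ ↦ f (circleMap c R θ)) (2 * π) :=
    fun θ ↦ by simp only [periodic_circleMap c R θ]
  rw [circleAverage_def, smul_inv_smul₀ (by positivity)]
  simpa only [neg_add_cancel_left, zero_add, two_mul] using hper.intervalIntegral_add_eq (-π) 0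

theorem integral_log_norm_sub_mul_exp {r : ℝ} (hr : r ≠ 0) (z : ℂ) :
    ∫ θ in (-π)..π, log ‖z - r * Complex.exp (θ * Complex.I)‖
      = 2 * π * (log r + log⁺ (r⁻¹ * ‖z‖)) := by
  have hmean : ∫ θ in (-π)..π, log ‖z - r * Complex.exp (θ * Complex.I)‖
      = 2 * π * circleAverage (log ‖· - z‖) 0 r := by
    rw [← smul_eq_mul, ← integral_neg_pi_pi_circleMap_eq_smul_circleAverage]
    simp only [circleMap_zero, norm_sub_rev]
  rw [hmean, circleAverage_log_norm_sub_const_eq_log_radius_add_posLog hr, zero_sub, norm_neg]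

/-- **The circular averaging identity for the logarithm.** For `z ∈ ℂ` and `r > 0`,
`∫_{−π}^{π} log|z − r e^{iθ}| dθ` equals `2π log r` if `|z| ≤ r` and `2π log|z|` if `|z| > r`. -/
theorem integral_log_abs_sub_circle (z : ℂ) (r : ℝ) (hr : 0 < r) :
    (‖z‖ ≤ r →
      ∫ θ in (-Real.pi)..Real.pi,
          Real.log (‖z - r * Complex.exp (θ * Complex.I)‖)
        = 2 * Real.pi * Real.log r) ∧
    (r < ‖z‖ →
      ∫ θ in (-Real.pi)..Real.pi,
          Real.log (‖z - r * Complex.exp (θ * Complex.I)‖)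
        = 2 * Real.pi * Real.log (‖z‖)) := by
  rw [integral_log_norm_sub_mul_exp hr.ne']
  have hratio : |r⁻¹ * ‖z‖| = r⁻¹ * ‖z‖ := abs_of_nonneg (by positivity)
  refine ⟨fun hz ↦ ?_, fun hz ↦ ?_⟩
  · rw [(posLog_eq_zero_iff _).2 (hratio.symm ▸ inv_mul_le_one_of_le₀ hz hr.le), add_zero]
  · rw [posLog_eq_log (hratio.symm ▸ (one_le_inv_mul₀ hr).2 hz.le),
      log_mul (inv_ne_zero hr.ne') (hr.trans hz).ne', log_inv]
    ring
end
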